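/- Let G be a group regarded as a one-object category and c : 1 → G the unique functor from the terminal category. Then the pushout category F_≃(G) has exactly one object, and its monoid of endomorphisms is isomorphic to the free monoid on the set G ∖ {e} of non-identity elements of G, via an isomorphism sending, for each g ∈ G ∖ {e}, the free isomorphism [g] to the single-letter word g, and sending the image of the length-one path on the identity element to the empty word. -/

import Mathlib

/-!
In the pushout, the only relation imposed on the free category on `G` is that the length-one
path on `e` becomes an identity. So `F_≃(G)` should be the one-object category on the free
monoid on `G ∖ {e}`. The universal property gives a functor `d` to that category, induced by
`toWords`, which sends `[g]` to the letter `g` and `[e]` to the empty word. The inverse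
`fromWords` sends a word to the composite of its letters as free isomorphisms.
`fromWords ⋙ d = 𝟭` can be checked on letters, and `d ⋙ fromWords = 𝟭` follows from the
uniqueness part of the universal property.
-/

open CategoryTheory

namespace Unrolling

/-- The free category comonad applied to a functor `c : A ⥤ B`, i.e. the induced functor
between path categories. -/
def freeMap {A B : Type*} [Category A] [Category B] (c : A ⥤ B) : Paths A ⥤ Paths B where
  obj x := c.obj x
  map f := c.toPrefunctor.mapPath f
  map_id _ := rfl
  map_comp f g := c.toPrefunctor.mapPath_comp f g

variable (G : Type) [Group G] {Fs : Type} [SmallCategory Fs]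

/-- The unique functor from the terminal category to the one-object category on `G`. -/
def cG : Discrete PUnit.{1} ⥤ SingleObj G := (Functor.const _).obj (SingleObj.star G)

/-- The image in `F_≃(G)` of the length-one path on the arrow `g : G`. -/
def freeArrow (i : Paths (SingleObj G) ⥤ Fs) (g : G) :
    i.obj ((Paths.of (SingleObj G)).obj (SingleObj.star G)) ⟶ i.obj ((Paths.of (SingleObj G)).obj (SingleObj.star G)) :=
  i.map ((Paths.of (SingleObj G)).map (SingleObj.toEnd G g))

lemma eq_of_comp_eq_id {C D : Type*} [Category C] [Category D] [Subsingleton D]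
    {d : C ⥤ D} {e : D ⥤ C} (h : d ⋙ e = 𝟭 C) (x y : C) : x = y :=
  have hd : Function.Injective d.obj :=
    Function.LeftInverse.injective (g := e.obj) fun x => Functor.congr_obj h x
  hd.subsingleton.elim x y

open Classical in
noncomputable def toWord {α : Type*} [One α] (a : α) : FreeMonoid {a : α // a ≠ 1} :=
  if h : a = 1 then 1 else FreeMonoid.of ⟨a, h⟩

lemma toWord_one {α : Type*} [One α] : toWord (1 : α) = 1 := dif_pos rfl

lemma toWord_of_ne_one {α : Type*} [One α] {a : α} (h : a ≠ 1) :
    toWord a = FreeMonoid.of ⟨a, h⟩ :=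
  dif_neg h

section Words

variable (M : Type) [Monoid M]

def toStar : Discrete PUnit.{1} ⥤ SingleObj M := (Functor.const _).obj (SingleObj.star M)

noncomputable def toWords : Paths (SingleObj M) ⥤ SingleObj (FreeMonoid {m : M // m ≠ 1}) :=
  Paths.lift { obj _ := SingleObj.star _, map m := toWord m }

variable {M}

lemma toWords_map_toPath (m : M) :
    (toWords M).map ((Paths.of (SingleObj M)).map (SingleObj.toEnd M m)) = toWord m :=
  Paths.lift_toPath _ _

end Words

lemma pathComposition_comp_toStar :
    pathComposition (Discrete PUnit.{1}) ⋙ toStar (FreeMonoid {g : G // g ≠ 1}) =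
      freeMap (cG G) ⋙ toWords G := by
  fapply Paths.ext_functor
  · rfl
  · rintro ⟨⟨⟩⟩ ⟨⟨⟩⟩ e
    simp only [eqToHom_refl, Category.id_comp, Category.comp_id]
    exact ((toWords_map_toPath (1 : G)).trans toWord_one).symm

section Pushout

variable {G} {i₀ : Discrete PUnit.{1} ⥤ Fs} {i : Paths (SingleObj G) ⥤ Fs}

lemma freeArrow_one (hcomm : pathComposition (Discrete PUnit.{1}) ⋙ i₀ = freeMap (cG G) ⋙ i) :
    freeArrow G i 1 = 𝟙 _ := by
  refine (Functor.congr_hom hcomm.symm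
    ((Paths.of (Discrete PUnit.{1})).map (𝟙 (Discrete.mk PUnit.unit)))).trans ?_
  dsimp only [Functor.comp_map, pathComposition_map]
  simp only [Functor.comp_obj, Paths.of_map, Discrete.functor_map_id, Category.id_comp,
    eqToHom_trans, eqToHom_refl]
  rfl

lemma map_freeArrow {M : Type} [Monoid M] {d : Fs ⥤ SingleObj M}
    {q : Paths (SingleObj G) ⥤ SingleObj M} (hd : i ⋙ d = q) (g : G) :
    d.map (freeArrow G i g) = q.map ((Paths.of (SingleObj G)).map (SingleObj.toEnd G g)) := by
  refine (Functor.congr_hom hd ((Paths.of (SingleObj G)).map (SingleObj.toEnd G g))).trans ?_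
  simp

variable (i) in
noncomputable def fromWords : SingleObj (FreeMonoid {g : G // g ≠ 1}) ⥤ Fs :=
  SingleObj.functor (FreeMonoid.lift fun p => freeArrow G i p.1)

lemma fromWords_map_of (p : {g : G // g ≠ 1}) :
    (fromWords i).map (X := SingleObj.star _) (Y := SingleObj.star _) (FreeMonoid.of p) =
      freeArrow G i p.1 :=
  FreeMonoid.lift_eval_of (M := End _) _ _

lemma fromWords_map_toWord
    (hcomm : pathComposition (Discrete PUnit.{1}) ⋙ i₀ = freeMap (cG G) ⋙ i) (g : G) :
    (fromWords i).map (X := SingleObj.star _) (Y := SingleObj.star _) (toWord g) =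
      freeArrow G i g := by
  by_cases hg : g = 1
  · subst hg
    change FreeMonoid.lift (M := End _) _ (toWord 1) = freeArrow G i 1
    rw [toWord_one, map_one, freeArrow_one hcomm]
    rfl
  · rw [toWord_of_ne_one hg]
    exact fromWords_map_of ⟨g, hg⟩

lemma toWords_comp_fromWords
    (hcomm : pathComposition (Discrete PUnit.{1}) ⋙ i₀ = freeMap (cG G) ⋙ i) :
    toWords G ⋙ fromWords i = i := by
  fapply Paths.ext_functor
  · rfl
  · intro _ _ g
    refine ((congrArg (fromWords i).map (toWords_map_toPath g)).trans
      (fromWords_map_toWord hcomm g)).trans ?_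
    exact ((Category.id_comp _).trans (Category.comp_id _)).symm

lemma toStar_comp_fromWords
    (hcomm : pathComposition (Discrete PUnit.{1}) ⋙ i₀ = freeMap (cG G) ⋙ i) :
    toStar _ ⋙ fromWords i = i₀ := by
  fapply CategoryTheory.Functor.ext
  · exact fun x => (Functor.congr_obj hcomm x).symm
  · rintro ⟨⟨⟩⟩ ⟨⟨⟩⟩ ⟨⟨⟨⟩⟩⟩
    simp only [Functor.comp_obj, Discrete.id_def', Discrete.functor_map_id, Category.id_comp]
    exact ((eqToHom_trans _ _).trans (eqToHom_refl _ _)).symm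

lemma fromWords_comp_eq_id {d : Fs ⥤ SingleObj (FreeMonoid {g : G // g ≠ 1})}
    (hd : i ⋙ d = toWords G) : fromWords i ⋙ d = 𝟭 _ := by
  rw [← SingleObj.mapHom_id, ← Equiv.symm_apply_eq]
  refine FreeMonoid.hom_eq fun p => ?_
  change d.map ((fromWords i).map (X := SingleObj.star _) (Y := SingleObj.star _)
    (FreeMonoid.of p)) = _
  rw [fromWords_map_of]
  exact (map_freeArrow hd p.1).trans ((toWords_map_toPath _).trans (toWord_of_ne_one p.2))

lemma existsUnique_desc
    (huniv : ∀ (T : Cat.{0, 0}) (q₀ : Discrete PUnit.{1} ⥤ T) (q : Paths (SingleObj G) ⥤ T),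
      pathComposition (Discrete PUnit.{1}) ⋙ q₀ = freeMap (cG G) ⋙ q →
      ∃! d : Fs ⥤ T, i₀ ⋙ d = q₀ ∧ i ⋙ d = q)
    {T : Type} [SmallCategory T] {q₀ : Discrete PUnit.{1} ⥤ T} {q : Paths (SingleObj G) ⥤ T}
    (h : pathComposition (Discrete PUnit.{1}) ⋙ q₀ = freeMap (cG G) ⋙ q) :
    ∃! d : Fs ⥤ T, i₀ ⋙ d = q₀ ∧ i ⋙ d = q :=
  huniv (Cat.of T) q₀ q h

lemma functor_ext_of_isPushout
    (hcomm : pathComposition (Discrete PUnit.{1}) ⋙ i₀ = freeMap (cG G) ⋙ i)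
    (huniv : ∀ (T : Cat.{0, 0}) (q₀ : Discrete PUnit.{1} ⥤ T) (q : Paths (SingleObj G) ⥤ T),
      pathComposition (Discrete PUnit.{1}) ⋙ q₀ = freeMap (cG G) ⋙ q →
      ∃! d : Fs ⥤ T, i₀ ⋙ d = q₀ ∧ i ⋙ d = q)
    {T : Type} [SmallCategory T] {F₁ F₂ : Fs ⥤ T}
    (h₀ : i₀ ⋙ F₁ = i₀ ⋙ F₂) (h : i ⋙ F₁ = i ⋙ F₂) : F₁ = F₂ :=
  (existsUnique_desc huniv (by rw [← Functor.assoc, hcomm, Functor.assoc])).unique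
    ⟨h₀, h⟩ ⟨rfl, rfl⟩

end Pushout

/-- Let `G` be a group regarded as a one-object category, and let
`F_≃(G)` (here `Fs`, with structure maps `i₀` and `i` satisfying the strict universal
property of the pushout in `Cat` of `ε : Paths 1 ⥤ 1` along `F(c) : Paths 1 ⥤ Paths G`).
Then `F_≃(G)` has exactly one object, and its endomorphism monoid is isomorphic to the free
monoid on `G ∖ {e}`, via an isomorphism sending each free isomorphism `[g]` (`g ≠ e`) to the
single-letter word `g`, and the image of the length-one path on the identity element to the
empty word. -/
theorem pushout_group_free_monoid
    (i₀ : Discrete PUnit.{1} ⥤ Fs) (i : Paths (SingleObj G) ⥤ Fs)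
    (hcomm : pathComposition (Discrete PUnit.{1}) ⋙ i₀ = freeMap (cG G) ⋙ i)
    (huniv : ∀ (T : Cat.{0, 0}) (q₀ : Discrete PUnit.{1} ⥤ T) (q : Paths (SingleObj G) ⥤ T),
      pathComposition (Discrete PUnit.{1}) ⋙ q₀ = freeMap (cG G) ⋙ q →
      ∃! d : Fs ⥤ T, i₀ ⋙ d = q₀ ∧ i ⋙ d = q) :
    (∀ x y : Fs, x = y) ∧
    ∃ φ : End (i.obj ((Paths.of (SingleObj G)).obj (SingleObj.star G))) ≃* FreeMonoid {g : G // g ≠ 1},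
      (∀ (g : G) (hg : g ≠ 1), φ (freeArrow G i g) = FreeMonoid.of ⟨g, hg⟩) ∧
      φ (freeArrow G i 1) = 1 := by
  obtain ⟨d, ⟨hd₀, hd⟩, -⟩ := existsUnique_desc huniv (pathComposition_comp_toStar G)
  have hde : d ⋙ fromWords i = 𝟭 Fs :=
    functor_ext_of_isPushout hcomm huniv
      (by rw [← Functor.assoc, hd₀, toStar_comp_fromWords hcomm, Functor.comp_id])
      (by rw [← Functor.assoc, hd, toWords_comp_fromWords hcomm, Functor.comp_id])
  let E : Fs ≌ SingleObj (FreeMonoid {g : G // g ≠ 1}) :=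
    CategoryTheory.Equivalence.mk d (fromWords i) (eqToIso hde.symm)
      (eqToIso (fromWords_comp_eq_id hd))
  have hφ (g : G) : E.fullyFaithfulFunctor.mulEquivEnd _ (freeArrow G i g) = toWord g :=
    (map_freeArrow hd g).trans (toWords_map_toPath g)
  refine ⟨eq_of_comp_eq_id hde,
    (E.fullyFaithfulFunctor.mulEquivEnd _).trans (SingleObj.toEnd _).symm, fun g hg => ?_, ?_⟩
  · exact (hφ g).trans (toWord_of_ne_one hg)
  · exact (hφ 1).trans toWord_one

end Unrolling
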